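/- arXiv:2405.00842 — 2 statements merged into one kernel-verified Lean document; each statement's English description precedes it below -/
import Mathlib

section
/- For every γ ≥ 1, the S-CuSum stopping time T_S with thresholds b0 = bC = log γ satisfies both E_∞[T_S] ≥ γ and inf_{ν≥1} E_{ν,μC}[T_S] ≥ γ. -/
open MeasureTheory ProbabilityTheory Filter Set
open scoped ENNReal NNReal

noncomputable section

namespace QCDStmt

variable {E : Type*} [MeasurableSpace E]

/-- `P` is the product probability measure under which the coordinates are independent,
`X_t ∼ μ0` for `t < ν` and `X_t ∼ μpost` for `t ≥ ν` (coordinate `0` is a dummy). -/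
def IsChangeMeasure (μ0 μpost : Measure E) (ν : ℕ) (P : Measure (ℕ → E)) : Prop :=
  IsProbabilityMeasure P ∧
    (∀ t : ℕ, Measure.map (fun ω : ℕ → E => ω t) P = if t < ν then μ0 else μpost) ∧
    iIndepFun (fun t (ω : ℕ → E) => ω t) P

/-- Expected value (possibly infinite) of a `ℕ∞`-valued random time. -/
def expTime (P : Measure (ℕ → E)) (T : (ℕ → E) → ℕ∞) : ℝ≥0∞ :=
  ∫⁻ ω, (T ω : ℝ≥0∞) ∂P

/-- The CuSum recursion: `c 0 = 0`, `c t = max (c (t-1) + w t) 0` (increments indexed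
from `1`). -/
def cusum (w : ℕ → ℝ) : ℕ → ℝ
  | 0 => 0
  | t + 1 => max (cusum w t + w (t + 1)) 0

/-- Log-likelihood ratio increment `W_t = log (dμB/dμ0)(X_t)`. -/
def Wstat (μ0 μB : Measure E) (t : ℕ) (ω : ℕ → E) : ℝ :=
  Real.log ((μB.rnDeriv μ0) (ω t)).toReal

/-- Log-likelihood ratio increment `Λ_t = log (dμB/dμC)(X_t)`. -/
def Lstat (μC μB : Measure E) (t : ℕ) (ω : ℕ → E) : ℝ :=
  Real.log ((μB.rnDeriv μC) (ω t)).toReal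

/-- The first stage stopping time `T_W = inf {t ≥ 1 : c_t ≥ b0}` of S-CuSum. -/
def TW (μ0 μB : Measure E) (b0 : ℝ) (ω : ℕ → E) : ℕ∞ :=
  sInf {s : ℕ∞ | ∃ t : ℕ, s = (t : ℕ∞) ∧ 1 ≤ t ∧ b0 ≤ cusum (fun i => Wstat μ0 μB i ω) t}

/-- The second-stage statistic of S-CuSum: `d n = 0` and `d t = max (d (t-1) + Λ t) 0`
for `t > n`, where `n` is the time the first stage stopped. -/
def dstat (lam : ℕ → ℝ) (n t : ℕ) : ℝ :=
  cusum (fun i => lam (n + i)) (t - n)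

/-- The S-CuSum stopping time `T_S = inf {t > T_W : d_t ≥ bC}` (`∞` if `T_W = ∞` or the
set is empty). -/
def TS (μ0 μC μB : Measure E) (b0 bC : ℝ) (ω : ℕ → E) : ℕ∞ :=
  sInf {s : ℕ∞ | ∃ t : ℕ, s = (t : ℕ∞) ∧ TW μ0 μB b0 ω < (t : ℕ∞) ∧
    bC ≤ dstat (fun i => Lstat μC μB i ω) (TW μ0 μB b0 ω).toNat t}

/-- The KL divergence `D(μ‖ν)` is finite (the log-likelihood ratio is `μ`-integrable). -/
def FinKL (μ ν : Measure E) : Prop :=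
  Integrable (fun x => Real.log (μ.rnDeriv ν x).toReal) μ


/-!
Let `ℓ_t` be the likelihood ratio of `X_t` against its true marginal: `dμB/dμ0` before the
change and `dμB/dμC` from the change on, so that the `ℓ_t` are independent with `E ℓ_t ≤ 1`.
With the Shiryaev–Roberts recursion `R_t = ℓ_t (1 + R_{t-1})`, consider
`Z_t = R_{T_W} 1{T_W ≤ t} + R^{(T_W)}_t`: the first-stage statistic frozen at `T_W`, plus the
statistic restarted at `T_W` (which is `R_t` itself before `T_W`). Then
`Z_{t+1} = (frozen part) + ℓ_{t+1} (1 + restarted part)`, so `Z_t - t` is a supermartingale.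
Since `exp (CuSum) ≤ max 1 (SR)` for matching increments, at `T_S` the frozen part is `≥ γ` if
`T_W` precedes the change (there `ℓ = e^W`), and the restarted part is `≥ γ` otherwise (there
`ℓ = e^Λ`). Optional stopping of `Z_t - t` at `T_S` gives `γ ≤ E T_S`.
-/

open Filtration

section FirstTime

-- `TW ω` and `TS ω` are definitionally of this form.
def firstTime (p : ℕ → Prop) : ℕ∞ := sInf {s : ℕ∞ | ∃ t : ℕ, s = t ∧ p t}

lemma firstTime_spec {p : ℕ → Prop} {n : ℕ} (h : firstTime p = n) : p n := by
  have hne : {s : ℕ∞ | ∃ t : ℕ, s = t ∧ p t}.Nonempty := by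
    rw [Set.nonempty_iff_ne_empty]
    intro he
    simp [firstTime, he] at h
  obtain ⟨j, hj, hpj⟩ := csInf_mem hne
  rw [← firstTime, h] at hj
  rwa [Nat.cast_injective hj]

lemma firstTime_le_iff {p : ℕ → Prop} {n : ℕ} : firstTime p ≤ n ↔ ∃ j ≤ n, p j := by
  constructor
  · intro h
    obtain ⟨j, hj⟩ := ENat.ne_top_iff_exists.1 (ne_top_of_le_ne_top (ENat.natCast_ne_top n) h)
    exact ⟨j, by exact_mod_cast hj ▸ h, firstTime_spec hj.symm⟩
  · rintro ⟨j, hjn, hpj⟩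
    have hmem : (j : ℕ∞) ∈ {s : ℕ∞ | ∃ t : ℕ, s = t ∧ p t} := ⟨j, rfl, hpj⟩
    exact (sInf_le hmem).trans (Nat.cast_le.2 hjn)

lemma isStoppingTime_firstTime {Ω : Type*} {m : MeasurableSpace Ω} {ℱ : Filtration ℕ m}
    {p : ℕ → Ω → Prop} (hp : ∀ j, MeasurableSet[ℱ j] {ω | p j ω}) :
    IsStoppingTime ℱ (fun ω => firstTime (p · ω)) := by
  intro i
  convert MeasurableSet.iUnion fun j => MeasurableSet.iUnion fun (hj : j ≤ i) => ℱ.mono hj _ (hp j)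
    using 1
  ext ω
  simp only [Set.mem_ofPred_eq, Set.mem_iUnion, exists_prop]
  exact firstTime_le_iff

end FirstTime

section ShiryaevRoberts

def shiryaevRoberts (ℓ : ℕ → ℝ≥0∞) : ℕ → ℝ≥0∞
  | 0 => 0
  | t + 1 => ℓ (t + 1) * (1 + shiryaevRoberts ℓ t)

lemma ofReal_exp_cusum_le {w : ℕ → ℝ} {ℓ : ℕ → ℝ≥0∞} {t : ℕ}
    (hℓ : ∀ i ≤ t, ℓ i = ENNReal.ofReal (Real.exp (w i))) :
    ENNReal.ofReal (Real.exp (cusum w t)) ≤ max 1 (shiryaevRoberts ℓ t) := by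
  induction t with
  | zero => simp [cusum]
  | succ t ih =>
    have ih := ih fun i hi => hℓ i (hi.trans t.le_succ)
    rcases le_total (cusum w t + w (t + 1)) 0 with h | h
    · simp [cusum, max_eq_right h]
    · rw [cusum, max_eq_left h, Real.exp_add, ENNReal.ofReal_mul (Real.exp_pos _).le,
        ← hℓ (t + 1) le_rfl, shiryaevRoberts]
      calc ENNReal.ofReal (Real.exp (cusum w t)) * ℓ (t + 1)
          ≤ max 1 (shiryaevRoberts ℓ t) * ℓ (t + 1) := by gcongr
        _ ≤ ℓ (t + 1) * (1 + shiryaevRoberts ℓ t) := by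
          rw [mul_comm]
          gcongr
          exact max_le le_self_add le_add_self
        _ ≤ _ := le_max_right _ _

lemma ofReal_exp_le_shiryaevRoberts {w : ℕ → ℝ} {ℓ : ℕ → ℝ≥0∞} {t : ℕ} {b : ℝ} (hb : 0 < b)
    (hℓ : ∀ i ≤ t, ℓ i = ENNReal.ofReal (Real.exp (w i))) (h : b ≤ cusum w t) :
    ENNReal.ofReal (Real.exp b) ≤ shiryaevRoberts ℓ t := by
  have h1 : 1 < ENNReal.ofReal (Real.exp b) := ENNReal.one_lt_ofReal.2 (Real.one_lt_exp_iff.2 hb)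
  have := (ENNReal.ofReal_le_ofReal (Real.exp_le_exp.2 h)).trans (ofReal_exp_cusum_le hℓ)
  exact (le_max_iff.1 this).resolve_left h1.not_ge

def frozenSR (ℓ : ℕ → ℝ≥0∞) (n : ℕ∞) (t : ℕ) : ℝ≥0∞ :=
  if n ≤ t then shiryaevRoberts ℓ n.toNat else 0

def restartedSR (ℓ : ℕ → ℝ≥0∞) (n : ℕ∞) (t : ℕ) : ℝ≥0∞ :=
  if n ≤ t then shiryaevRoberts (fun i => ℓ (n.toNat + i)) (t - n.toNat)
  else shiryaevRoberts ℓ t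

variable (ℓ : ℕ → ℝ≥0∞) (n : ℕ∞) (t : ℕ)

lemma frozenSR_zero : frozenSR ℓ n 0 = 0 := by
  unfold frozenSR
  split_ifs with h
  · rw [nonpos_iff_eq_zero.1 h]
    rfl
  · rfl

lemma restartedSR_zero : restartedSR ℓ n 0 = 0 := by
  unfold restartedSR
  split_ifs <;> simp [shiryaevRoberts]

lemma frozenSR_succ : frozenSR ℓ n (t + 1) =
    if n = (t + 1 : ℕ) then ℓ (t + 1) * (1 + restartedSR ℓ n t) else frozenSR ℓ n t := by
  induction n using ENat.recTopCoe with
  | top =>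
    rw [if_neg (ENat.natCast_ne_top _).symm]
    simp [frozenSR]
  | coe k =>
    simp only [frozenSR, restartedSR, Nat.cast_le, Nat.cast_inj, ENat.toNat_natCast]
    rcases lt_trichotomy k (t + 1) with h | rfl | h
    · simp [h.ne, Nat.lt_succ_iff.1 h, h.le]
    · simp [shiryaevRoberts]
    · simp [h.ne', Nat.not_le.2 h, Nat.not_le.2 (Nat.lt_of_succ_lt h)]

lemma restartedSR_succ : restartedSR ℓ n (t + 1) =
    if n = (t + 1 : ℕ) then 0 else ℓ (t + 1) * (1 + restartedSR ℓ n t) := by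
  induction n using ENat.recTopCoe with
  | top =>
    rw [if_neg (ENat.natCast_ne_top _).symm]
    simp [restartedSR, shiryaevRoberts]
  | coe k =>
    simp only [restartedSR, Nat.cast_le, Nat.cast_inj, ENat.toNat_natCast]
    rcases lt_trichotomy k (t + 1) with h | rfl | h
    · simp only [h.le, Nat.lt_succ_iff.1 h, h.ne, if_true, if_false]
      rw [show t + 1 - k = t - k + 1 by omega, shiryaevRoberts,
        show k + (t - k + 1) = t + 1 by omega]
    · simp [shiryaevRoberts]
    · simp [shiryaevRoberts, h.ne', Nat.not_le.2 h, Nat.not_le.2 (Nat.lt_of_succ_lt h)]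

lemma frozenSR_add_restartedSR_succ : frozenSR ℓ n (t + 1) + restartedSR ℓ n (t + 1) =
    frozenSR ℓ n t + ℓ (t + 1) * (1 + restartedSR ℓ n t) := by
  rw [frozenSR_succ, restartedSR_succ]
  split_ifs with h
  · rw [frozenSR, if_neg (by rw [h]; exact_mod_cast Nat.not_succ_le_self t), zero_add, add_zero]
  · rfl

end ShiryaevRoberts

lemma measurable_cusum {Ω : Type*} {m : MeasurableSpace Ω} {w : ℕ → Ω → ℝ} {t : ℕ}
    (hw : ∀ i ≤ t, Measurable[m] (w i)) : Measurable[m] fun ω => cusum (w · ω) t := by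
  induction t with
  | zero => exact measurable_const
  | succ t ih =>
    exact ((ih fun i hi => hw i (hi.trans t.le_succ)).add (hw (t + 1) le_rfl)).max
      measurable_const

lemma measurable_frozenSR_restartedSR {Ω : Type*} {m : MeasurableSpace Ω} {ℱ : Filtration ℕ m}
    {ℓ : ℕ → Ω → ℝ≥0∞} {N : Ω → ℕ∞} (hℓ : ∀ t, Measurable[ℱ t] (ℓ t))
    (hN : IsStoppingTime ℱ N) (t : ℕ) :
    Measurable[ℱ t] (fun ω => frozenSR (ℓ · ω) (N ω) t) ∧
      Measurable[ℱ t] (fun ω => restartedSR (ℓ · ω) (N ω) t) := by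
  induction t with
  | zero =>
    simp only [frozenSR_zero, restartedSR_zero]
    exact ⟨measurable_const, measurable_const⟩
  | succ t ih =>
    have hN' : MeasurableSet[ℱ (t + 1)] {ω | N ω = ((t + 1 : ℕ) : ℕ∞)} :=
      hN.measurableSet_eq (t + 1)
    have hmono := ℱ.mono t.le_succ
    have hstep : Measurable[ℱ (t + 1)]
        fun ω => ℓ (t + 1) ω * (1 + restartedSR (ℓ · ω) (N ω) t) :=
      (hℓ _).mul (measurable_const.add (ih.2.mono hmono le_rfl))
    simp only [frozenSR_succ, restartedSR_succ]
    exact ⟨hstep.ite hN' (ih.1.mono hmono le_rfl), measurable_const.ite hN' hstep⟩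

section OptionalStopping

variable {Ω : Type*} [MeasurableSpace Ω] {P : Measure Ω} {Z : ℕ → Ω → ℝ≥0∞} {T : Ω → ℕ∞}
  {c : ℝ≥0∞}

lemma lintegral_stoppedProcess_le (hT : Measurable T) (hZ0 : ∀ ω, Z 0 ω = 0)
    (hstep : ∀ t : ℕ, ∫⁻ ω in {ω | (t : ℕ∞) < T ω}, Z (t + 1) ω ∂P ≤
      ∫⁻ ω in {ω | (t : ℕ∞) < T ω}, Z t ω ∂P + P {ω | (t : ℕ∞) < T ω}) (n : ℕ) :
    ∫⁻ ω, stoppedProcess Z T n ω ∂P ≤ ∑ t ∈ Finset.range n, P {ω | (t : ℕ∞) < T ω} := by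
  induction n with
  | zero =>
    have h0 : ∀ ω, stoppedProcess Z T 0 ω = 0 := fun ω =>
      (stoppedProcess_eq_of_le (zero_le : (0 : ℕ∞) ≤ T ω)).trans (hZ0 ω)
    simp [h0]
  | succ n ih =>
    set S := {ω | (n : ℕ∞) < T ω}
    have hS : MeasurableSet S := hT (.of_discrete : MeasurableSet (Set.Ioi (n : ℕ∞)))
    have h_stopped : ∀ ω ∈ Sᶜ, stoppedProcess Z T (n + 1) ω = stoppedProcess Z T n ω := by
      intro ω hω
      have hTn : T ω ≤ n := not_lt.1 hω
      have hTn' : T ω ≤ (n + 1 : ℕ) := hTn.trans (Nat.cast_le.2 n.le_succ)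
      rw [stoppedProcess_eq_of_ge hTn, stoppedProcess_eq_of_ge hTn']
    have h_running : ∀ k ≤ n + 1, ∀ ω ∈ S, stoppedProcess Z T k ω = Z k ω := by
      intro k hk ω hω
      have hkT : (k : ℕ∞) ≤ T ω :=
        (Nat.cast_le.2 hk).trans ((ENat.add_one_le_iff (ENat.natCast_ne_top n)).2 hω)
      exact stoppedProcess_eq_of_le hkT
    have hsplit : ∫⁻ ω, stoppedProcess Z T n ω ∂P =
        ∫⁻ ω in S, Z n ω ∂P + ∫⁻ ω in Sᶜ, stoppedProcess Z T n ω ∂P := by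
      rw [← lintegral_add_compl _ hS, setLIntegral_congr_fun hS (h_running n n.le_succ)]
    rw [← lintegral_add_compl _ hS, setLIntegral_congr_fun hS.compl h_stopped,
      setLIntegral_congr_fun hS (h_running _ le_rfl), Finset.sum_range_succ]
    calc ∫⁻ ω in S, Z (n + 1) ω ∂P + ∫⁻ ω in Sᶜ, stoppedProcess Z T n ω ∂P
        ≤ ∫⁻ ω in S, Z n ω ∂P + P S + ∫⁻ ω in Sᶜ, stoppedProcess Z T n ω ∂P := by
          gcongr
          exact hstep n
      _ = ∫⁻ ω, stoppedProcess Z T n ω ∂P + P S := by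
          rw [hsplit]
          ring
      _ ≤ _ := by gcongr

lemma sum_measure_lt_le_lintegral (hT : Measurable T) (n : ℕ) :
    ∑ t ∈ Finset.range n, P {ω | (t : ℕ∞) < T ω} ≤ ∫⁻ ω, (T ω : ℝ≥0∞) ∂P := by
  have hcount : ∀ x : ℕ∞,
      ∑ t ∈ Finset.range n, {y : ℕ∞ | (t : ℕ∞) < y}.indicator 1 x ≤ (x : ℝ≥0∞) := by
    intro x
    induction x using ENat.recTopCoe with
    | top => simp
    | coe k =>
      simp only [Set.indicator_apply, Set.mem_ofPred_eq, Nat.cast_lt, Pi.one_apply,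
        Finset.sum_boole, ENat.toENNReal_coe, Nat.cast_le]
      exact (Finset.card_le_card fun t ht => by simp_all).trans (Finset.card_range k).le
  calc ∑ t ∈ Finset.range n, P {ω | (t : ℕ∞) < T ω}
      = ∫⁻ ω, ∑ t ∈ Finset.range n, {y : ℕ∞ | (t : ℕ∞) < y}.indicator 1 (T ω) ∂P := by
        rw [lintegral_finsetSum]
        · refine Finset.sum_congr rfl fun t _ => ?_
          rw [← lintegral_indicator_one (show MeasurableSet {ω | (t : ℕ∞) < T ω} from
            hT (.of_discrete : MeasurableSet (Set.Ioi (t : ℕ∞))))]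
          rfl
        · exact fun t _ =>
            (Measurable.of_discrete (f := {y : ℕ∞ | (t : ℕ∞) < y}.indicator 1)).comp hT
    _ ≤ ∫⁻ ω, (T ω : ℝ≥0∞) ∂P := lintegral_mono fun ω => hcount (T ω)

lemma mul_measure_lt_le_lintegral (hT : Measurable T) (hZ0 : ∀ ω, Z 0 ω = 0)
    (hstep : ∀ t : ℕ, ∫⁻ ω in {ω | (t : ℕ∞) < T ω}, Z (t + 1) ω ∂P ≤
      ∫⁻ ω in {ω | (t : ℕ∞) < T ω}, Z t ω ∂P + P {ω | (t : ℕ∞) < T ω})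
    (hcross : ∀ ω (t : ℕ), T ω = t → c ≤ Z t ω) (n : ℕ) :
    c * P {ω | T ω < n} ≤ ∫⁻ ω, (T ω : ℝ≥0∞) ∂P := by
  have hcross_stopped : ∀ ω, {ω | T ω < n}.indicator (fun _ => c) ω ≤ stoppedProcess Z T n ω := by
    intro ω
    by_cases h : T ω < n
    · obtain ⟨k, hk⟩ := ENat.ne_top_iff_exists.1 (ne_top_of_lt h)
      have hle : T ω ≤ n := h.le
      rw [Set.indicator_of_mem (show ω ∈ {ω | T ω < n} from h), stoppedProcess_eq_of_ge hle, ← hk]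
      exact hcross ω k hk.symm
    · rw [Set.indicator_of_notMem (show ω ∉ {ω | T ω < n} from h)]
      exact zero_le
  calc c * P {ω | T ω < n} = ∫⁻ ω, {ω | T ω < n}.indicator (fun _ => c) ω ∂P :=
        (lintegral_indicator_const (hT .of_discrete) c).symm
    _ ≤ ∫⁻ ω, stoppedProcess Z T n ω ∂P := lintegral_mono hcross_stopped
    _ ≤ ∑ t ∈ Finset.range n, P {ω | (t : ℕ∞) < T ω} := lintegral_stoppedProcess_le hT hZ0 hstep n
    _ ≤ _ := sum_measure_lt_le_lintegral hT n

theorem le_lintegral_of_crossing [IsProbabilityMeasure P] (hT : Measurable T)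
    (hZ0 : ∀ ω, Z 0 ω = 0)
    (hstep : ∀ t : ℕ, ∫⁻ ω in {ω | (t : ℕ∞) < T ω}, Z (t + 1) ω ∂P ≤
      ∫⁻ ω in {ω | (t : ℕ∞) < T ω}, Z t ω ∂P + P {ω | (t : ℕ∞) < T ω})
    (hcross : ∀ ω (t : ℕ), T ω = t → c ≤ Z t ω) :
    c ≤ ∫⁻ ω, (T ω : ℝ≥0∞) ∂P := by
  by_cases htop : P {ω | T ω = ⊤} = 0
  · have hfinite : ⋃ n : ℕ, {ω | T ω < n} = {ω | T ω = ⊤}ᶜ := by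
      ext ω
      simp only [Set.mem_iUnion, Set.mem_ofPred_eq, Set.mem_compl_iff]
      refine ⟨fun ⟨n, hn⟩ => ne_top_of_lt hn, fun h => ?_⟩
      obtain ⟨k, hk⟩ := ENat.ne_top_iff_exists.1 h
      exact ⟨k + 1, by rw [← hk]; exact_mod_cast k.lt_succ_self⟩
    have hmono : Monotone fun n : ℕ => {ω | T ω < n} := fun m n hmn ω (hω : T ω < m) =>
      show T ω < n from hω.trans_le (Nat.cast_le.2 hmn)
    calc c = c * P (⋃ n : ℕ, {ω | T ω < n}) := by
          rw [hfinite, (prob_compl_eq_one_iff (show MeasurableSet {ω | T ω = ⊤} from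
            hT (.of_discrete : MeasurableSet ({⊤} : Set ℕ∞)))).2 htop, mul_one]
      _ = ⨆ n : ℕ, c * P {ω | T ω < n} := by rw [hmono.measure_iUnion, ENNReal.mul_iSup]
      _ ≤ _ := iSup_le (mul_measure_lt_le_lintegral hT hZ0 hstep hcross)
  · have : ∫⁻ ω, (T ω : ℝ≥0∞) ∂P = ⊤ :=
      lintegral_eq_top_of_measure_eq_top_ne_zero (Measurable.of_discrete.comp hT).aemeasurable
        (by simpa using htop)
    rw [this]
    exact le_top

end OptionalStopping

lemma lintegral_ofReal_exp_log_rnDeriv_le {α : Type*} [MeasurableSpace α] {μ ν : Measure α}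
    [SigmaFinite μ] [SigmaFinite ν] (hνμ : ν ≪ μ) :
    ∫⁻ x, ENNReal.ofReal (Real.exp (Real.log (μ.rnDeriv ν x).toReal)) ∂ν ≤ μ Set.univ := by
  calc ∫⁻ x, ENNReal.ofReal (Real.exp (Real.log (μ.rnDeriv ν x).toReal)) ∂ν
      = ∫⁻ x, μ.rnDeriv ν x ∂ν := by
        refine lintegral_congr_ae ?_
        filter_upwards [Measure.rnDeriv_pos' hνμ, Measure.rnDeriv_lt_top μ ν] with x hpos hlt
        rw [Real.exp_log (ENNReal.toReal_pos hpos.ne' hlt.ne), ENNReal.ofReal_toReal hlt.ne]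
    _ ≤ μ Set.univ := Measure.lintegral_rnDeriv_le

section CoordinateProcess

variable {P : Measure (ℕ → E)}

lemma measurable_eval_piLE {i t : ℕ} (h : i ≤ t) :
    Measurable[piLE t] (fun ω : ℕ → E => ω i) := by
  rw [piLE_eq_comap_frestrictLe]
  exact (measurable_pi_apply (X := fun _ : Finset.Iic t => E) ⟨i, Finset.mem_Iic.2 h⟩).comp
    (comap_measurable _)

lemma lintegral_mul_eval_succ (hind : iIndepFun (fun t (ω : ℕ → E) => ω t) P) {t : ℕ}
    {F : (ℕ → E) → ℝ≥0∞} (hF : Measurable[piLE t] F) {g : E → ℝ≥0∞} (hg : Measurable g) :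
    ∫⁻ ω, F ω * g (ω (t + 1)) ∂P = (∫⁻ ω, F ω ∂P) * ∫⁻ ω, g (ω (t + 1)) ∂P := by
  have hI := hind.indepFun_finset (Finset.Iic t) {t + 1} (by simp) fun i => measurable_pi_apply i
  rw [piLE_eq_comap_frestrictLe] at hF
  exact lintegral_mul_eq_lintegral_mul_lintegral_of_independent_measurableSpace
    (Preorder.measurable_frestrictLe t).comap_le
    (measurable_pi_lambda _ fun i => measurable_pi_apply _).comap_le hI hF
    ((hg.comp (measurable_pi_apply (X := fun _ : ({t + 1} : Finset ℕ) => E)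
      ⟨t + 1, Finset.mem_singleton_self _⟩)).comp
      (comap_measurable _))

lemma setLIntegral_mul_eval_succ_le (hind : iIndepFun (fun t (ω : ℕ → E) => ω t) P) {t : ℕ}
    {S : Set (ℕ → E)} (hS : MeasurableSet[piLE t] S) {F : (ℕ → E) → ℝ≥0∞}
    (hF : Measurable[piLE t] F) {g : E → ℝ≥0∞} (hg : Measurable g)
    (hg1 : ∫⁻ ω, g (ω (t + 1)) ∂P ≤ 1) :
    ∫⁻ ω in S, g (ω (t + 1)) * F ω ∂P ≤ ∫⁻ ω in S, F ω ∂P := by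
  have hS' : MeasurableSet S := piLE.le t S hS
  rw [← lintegral_indicator hS', ← lintegral_indicator hS']
  calc ∫⁻ ω, S.indicator (fun ω => g (ω (t + 1)) * F ω) ω ∂P
      = ∫⁻ ω, S.indicator F ω * g (ω (t + 1)) ∂P := by
        congr 1
        funext ω
        by_cases hω : ω ∈ S <;> simp [hω, mul_comm]
    _ = (∫⁻ ω, S.indicator F ω ∂P) * ∫⁻ ω, g (ω (t + 1)) ∂P :=
        lintegral_mul_eval_succ hind (hF.indicator hS) hg
    _ ≤ (∫⁻ ω, S.indicator F ω ∂P) * 1 := by gcongr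
    _ = ∫⁻ ω, S.indicator F ω ∂P := mul_one _

end CoordinateProcess

section SCusum

variable {μ0 μC μB : Measure E}

lemma measurable_Wstat_piLE {i t : ℕ} (h : i ≤ t) : Measurable[piLE t] (Wstat μ0 μB i) :=
  (Real.measurable_log.comp (μB.measurable_rnDeriv μ0).ennreal_toReal).comp
    (measurable_eval_piLE h)

lemma measurable_Lstat_piLE {i t : ℕ} (h : i ≤ t) : Measurable[piLE t] (Lstat μC μB i) :=
  (Real.measurable_log.comp (μB.measurable_rnDeriv μC).ennreal_toReal).comp
    (measurable_eval_piLE h)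

lemma TW_spec {b0 : ℝ} {ω : ℕ → E} {n : ℕ} (h : TW μ0 μB b0 ω = n) :
    1 ≤ n ∧ b0 ≤ cusum (fun i => Wstat μ0 μB i ω) n :=
  firstTime_spec h

lemma TS_spec {b0 bC : ℝ} {ω : ℕ → E} {t : ℕ} (h : TS μ0 μC μB b0 bC ω = t) :
    TW μ0 μB b0 ω < t ∧ bC ≤ dstat (fun i => Lstat μC μB i ω) (TW μ0 μB b0 ω).toNat t :=
  firstTime_spec h

lemma isStoppingTime_TW (b0 : ℝ) : IsStoppingTime piLE (TW μ0 μB b0) :=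
  isStoppingTime_firstTime fun _ => (MeasurableSet.const _).inter
    (measurableSet_le measurable_const (measurable_cusum fun _ hi => measurable_Wstat_piLE hi))

lemma isStoppingTime_TS (b0 bC : ℝ) : IsStoppingTime piLE (TS μ0 μC μB b0 bC) := by
  refine isStoppingTime_firstTime
    (p := fun j ω => TW μ0 μB b0 ω < j ∧
      bC ≤ dstat (fun i => Lstat μC μB i ω) (TW μ0 μB b0 ω).toNat j) fun j => ?_
  have hdecomp : {ω | TW μ0 μB b0 ω < j ∧
      bC ≤ dstat (fun i => Lstat μC μB i ω) (TW μ0 μB b0 ω).toNat j} =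
      ⋃ n, ⋃ (_ : n < j), {ω | TW μ0 μB b0 ω = n} ∩
        {ω | bC ≤ dstat (fun i => Lstat μC μB i ω) n j} := by
    ext ω
    simp only [Set.mem_ofPred_eq, Set.mem_iUnion, Set.mem_inter_iff, exists_prop]
    constructor
    · rintro ⟨hlt, hd⟩
      obtain ⟨n, hn⟩ := ENat.ne_top_iff_exists.1 (ne_top_of_lt hlt)
      rw [← hn] at hlt hd
      exact ⟨n, by exact_mod_cast hlt, hn.symm, by simpa using hd⟩
    · rintro ⟨n, hnj, hn, hd⟩
      rw [hn]
      exact ⟨by exact_mod_cast hnj, by simpa using hd⟩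
  rw [hdecomp]
  refine .iUnion fun n => .iUnion fun hnj => .inter ?_ ?_
  · exact piLE.mono hnj.le _ ((isStoppingTime_TW b0).measurableSet_eq n)
  · exact measurableSet_le measurable_const
      (measurable_cusum fun i hi => measurable_Lstat_piLE (by omega))

lemma measurable_TS (b0 bC : ℝ) : Measurable (TS μ0 μC μB b0 bC) :=
  ENat.measurable_iff.2 fun n => piLE.le n _ ((isStoppingTime_TS b0 bC).measurableSet_eq n)

lemma one_le_TS (b0 bC : ℝ) (ω : ℕ → E) : 1 ≤ TS μ0 μC μB b0 bC ω := by
  by_contra h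
  have h0 : TS μ0 μC μB b0 bC ω = (0 : ℕ) := Order.lt_one_iff.1 (not_le.1 h)
  exact not_lt_zero (TS_spec h0).1

lemma one_le_expTime_TS {P : Measure (ℕ → E)} [IsProbabilityMeasure P] (b0 bC : ℝ) :
    1 ≤ expTime P (TS μ0 μC μB b0 bC) :=
  calc 1 = ∫⁻ _, 1 ∂P := by simp
    _ ≤ expTime P (TS μ0 μC μB b0 bC) :=
      lintegral_mono fun ω => ENat.toENNReal_one ▸ ENat.toENNReal_le.2 (one_le_TS b0 bC ω)

end SCusum

section SCusumSR

variable (μ0 μC μB : Measure E)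

-- `exp ∘ log ∘ toReal` agrees with the density wherever it is positive and finite, hence a.e.
-- under the true marginal, and it makes `ℓ_i = exp W_i` resp. `exp Λ_i` hold pointwise.
def likelihoodRatio (ν : ℕ∞) (i : ℕ) (x : E) : ℝ≥0∞ :=
  ENNReal.ofReal (Real.exp (Real.log
    (if (i : ℕ∞) < ν then μB.rnDeriv μ0 x else μB.rnDeriv μC x).toReal))

def sCusumSR (b0 : ℝ) (ν : ℕ∞) (t : ℕ) (ω : ℕ → E) : ℝ≥0∞ :=
  frozenSR (fun i => likelihoodRatio μ0 μC μB ν i (ω i)) (TW μ0 μB b0 ω) t +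
    restartedSR (fun i => likelihoodRatio μ0 μC μB ν i (ω i)) (TW μ0 μB b0 ω) t

variable {μ0 μC μB}

lemma likelihoodRatio_of_lt {ν : ℕ∞} {i : ℕ} (h : (i : ℕ∞) < ν) (ω : ℕ → E) :
    likelihoodRatio μ0 μC μB ν i (ω i) = ENNReal.ofReal (Real.exp (Wstat μ0 μB i ω)) := by
  simp [likelihoodRatio, Wstat, h]

lemma likelihoodRatio_of_le {ν : ℕ∞} {i : ℕ} (h : ν ≤ i) (ω : ℕ → E) :
    likelihoodRatio μ0 μC μB ν i (ω i) = ENNReal.ofReal (Real.exp (Lstat μC μB i ω)) := by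
  simp [likelihoodRatio, Lstat, not_lt.2 h]

lemma measurable_likelihoodRatio (ν : ℕ∞) (i : ℕ) :
    Measurable (likelihoodRatio μ0 μC μB ν i) := by
  unfold likelihoodRatio
  split_ifs <;> fun_prop

lemma lintegral_likelihoodRatio_le [SigmaFinite μ0] [SigmaFinite μC] [IsProbabilityMeasure μB]
    (hac0B : μ0 ≪ μB) (hacCB : μC ≪ μB) (ν : ℕ∞) (i : ℕ) :
    ∫⁻ x, likelihoodRatio μ0 μC μB ν i x ∂(if (i : ℕ∞) < ν then μ0 else μC) ≤ 1 := by
  unfold likelihoodRatio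
  split_ifs
  · exact (lintegral_ofReal_exp_log_rnDeriv_le hac0B).trans_eq measure_univ
  · exact (lintegral_ofReal_exp_log_rnDeriv_le hacCB).trans_eq measure_univ

lemma sCusumSR_zero (b0 : ℝ) (ν : ℕ∞) (ω : ℕ → E) : sCusumSR μ0 μC μB b0 ν 0 ω = 0 := by
  simp [sCusumSR, frozenSR_zero, restartedSR_zero]

lemma ofReal_exp_le_sCusumSR {b : ℝ} (hb : 0 < b) (ν : ℕ∞) {ω : ℕ → E} {t : ℕ}
    (h : TS μ0 μC μB b b ω = t) : ENNReal.ofReal (Real.exp b) ≤ sCusumSR μ0 μC μB b ν t ω := by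
  obtain ⟨hlt, hd⟩ := TS_spec h
  obtain ⟨n, hn⟩ := ENat.ne_top_iff_exists.1 (ne_top_of_lt hlt)
  have hnt : n ≤ t := by exact_mod_cast (hn ▸ hlt).le
  obtain ⟨-, hc⟩ := TW_spec hn.symm
  rw [← hn, ENat.toNat_natCast] at hd
  simp only [sCusumSR, frozenSR, restartedSR, ← hn, Nat.cast_le, hnt, if_true,
    ENat.toNat_natCast]
  rcases lt_or_ge (n : ℕ∞) ν with hν | hν
  · refine le_add_right (ofReal_exp_le_shiryaevRoberts hb (fun i hi => ?_) hc)
    exact likelihoodRatio_of_lt ((Nat.cast_le.2 hi).trans_lt hν) ω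
  · refine le_add_left (ofReal_exp_le_shiryaevRoberts hb (fun i _ => ?_) hd)
    exact likelihoodRatio_of_le (hν.trans (Nat.cast_le.2 (Nat.le_add_right n i))) ω

lemma setLIntegral_sCusumSR_succ_le [SigmaFinite μ0] [SigmaFinite μC] [IsProbabilityMeasure μB]
    (hac0B : μ0 ≪ μB) (hacCB : μC ≪ μB) {ν : ℕ∞} {P : Measure (ℕ → E)}
    (hind : iIndepFun (fun t (ω : ℕ → E) => ω t) P)
    (hmar : ∀ t, P.map (fun ω => ω t) = if (t : ℕ∞) < ν then μ0 else μC) (b0 bC : ℝ) (t : ℕ) :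
    ∫⁻ ω in {ω | (t : ℕ∞) < TS μ0 μC μB b0 bC ω}, sCusumSR μ0 μC μB b0 ν (t + 1) ω ∂P ≤
      ∫⁻ ω in {ω | (t : ℕ∞) < TS μ0 μC μB b0 bC ω}, sCusumSR μ0 μC μB b0 ν t ω ∂P +
        P {ω | (t : ℕ∞) < TS μ0 μC μB b0 bC ω} := by
  set S := {ω | (t : ℕ∞) < TS μ0 μC μB b0 bC ω}
  set ℓ : ℕ → (ℕ → E) → ℝ≥0∞ := fun i ω => likelihoodRatio μ0 μC μB ν i (ω i)
  set frozen := fun ω => frozenSR (ℓ · ω) (TW μ0 μB b0 ω) t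
  set restarted := fun ω => restartedSR (ℓ · ω) (TW μ0 μB b0 ω) t
  have hS : MeasurableSet[piLE t] S := (isStoppingTime_TS b0 bC).measurableSet_gt t
  obtain ⟨hfrozen, hrestarted⟩ : Measurable[piLE t] frozen ∧ Measurable[piLE t] restarted :=
    measurable_frozenSR_restartedSR (ℓ := ℓ)
      (fun i => (measurable_likelihoodRatio ν i).comp (measurable_eval_piLE le_rfl))
      (isStoppingTime_TW b0) t
  have hfrozen' : Measurable frozen := hfrozen.mono (piLE.le t) le_rfl
  have hrestarted' : Measurable restarted := hrestarted.mono (piLE.le t) le_rfl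
  have hmean : ∫⁻ ω, ℓ (t + 1) ω ∂P ≤ 1 := by
    rw [← lintegral_map (measurable_likelihoodRatio ν (t + 1)) (measurable_pi_apply _), hmar]
    exact lintegral_likelihoodRatio_le hac0B hacCB ν (t + 1)
  calc ∫⁻ ω in S, sCusumSR μ0 μC μB b0 ν (t + 1) ω ∂P
      = ∫⁻ ω in S, frozen ω + ℓ (t + 1) ω * (1 + restarted ω) ∂P := by
        simp only [sCusumSR, frozenSR_add_restartedSR_succ]
        rfl
    _ = ∫⁻ ω in S, frozen ω ∂P + ∫⁻ ω in S, ℓ (t + 1) ω * (1 + restarted ω) ∂P :=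
        lintegral_add_left hfrozen' _
    _ ≤ ∫⁻ ω in S, frozen ω ∂P + ∫⁻ ω in S, (1 + restarted ω) ∂P :=
        add_le_add le_rfl (setLIntegral_mul_eval_succ_le hind hS (hrestarted.const_add 1)
          (measurable_likelihoodRatio ν (t + 1)) hmean)
    _ = ∫⁻ ω in S, sCusumSR μ0 μC μB b0 ν t ω ∂P + P S := by
        rw [lintegral_add_left measurable_const, setLIntegral_const, one_mul]
        simp only [sCusumSR]
        rw [lintegral_add_left hfrozen']
        ring

theorem ofReal_exp_le_expTime_TS [SigmaFinite μ0] [SigmaFinite μC] [IsProbabilityMeasure μB]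
    (hac0B : μ0 ≪ μB) (hacCB : μC ≪ μB) {b : ℝ} (hb : 0 < b) (ν : ℕ∞)
    {P : Measure (ℕ → E)} [IsProbabilityMeasure P]
    (hind : iIndepFun (fun t (ω : ℕ → E) => ω t) P)
    (hmar : ∀ t, P.map (fun ω => ω t) = if (t : ℕ∞) < ν then μ0 else μC) :
    ENNReal.ofReal (Real.exp b) ≤ expTime P (TS μ0 μC μB b b) :=
  le_lintegral_of_crossing (measurable_TS b b) (sCusumSR_zero b ν)
    (setLIntegral_sCusumSR_succ_le hac0B hacCB hind hmar b b)
    fun _ _ h => ofReal_exp_le_sCusumSR hb ν h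

end SCusumSR

theorem sCusum_false_alarm_lower_bound_general
    (μ0 μC μB : Measure E)
    [IsProbabilityMeasure μ0] [IsProbabilityMeasure μC] [IsProbabilityMeasure μB]
    (hac0B : μ0 ≪ μB)
    (hacCB : μC ≪ μB)
    (γ : ℝ) (hγ : 1 ≤ γ) :
    (∀ Pinf : Measure (ℕ → E), IsChangeMeasure μ0 μ0 1 Pinf →
      ENNReal.ofReal γ ≤ expTime Pinf (TS μ0 μC μB (Real.log γ) (Real.log γ))) ∧
    (∀ ν : ℕ, 1 ≤ ν → ∀ P : Measure (ℕ → E), IsChangeMeasure μ0 μC ν P →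
      ENNReal.ofReal γ ≤ expTime P (TS μ0 μC μB (Real.log γ) (Real.log γ))) := by
  have key : ∀ (ν : ℕ∞) (P : Measure (ℕ → E)), IsProbabilityMeasure P →
      iIndepFun (fun t (ω : ℕ → E) => ω t) P →
      (∀ t, P.map (fun ω => ω t) = if (t : ℕ∞) < ν then μ0 else μC) →
      ENNReal.ofReal γ ≤ expTime P (TS μ0 μC μB (Real.log γ) (Real.log γ)) := by
    intro ν P _ hind hmar
    rcases hγ.eq_or_lt with rfl | hγ1
    · simpa using one_le_expTime_TS (μ0 := μ0) (μC := μC) (μB := μB) (P := P) 0 0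
    · simpa [Real.exp_log (zero_lt_one.trans hγ1)] using
        ofReal_exp_le_expTime_TS hac0B hacCB (Real.log_pos hγ1) ν hind hmar
  refine ⟨fun P ⟨hP, hmar, hind⟩ => key ⊤ P hP hind fun t => ?_,
    fun ν _ P ⟨hP, hmar, hind⟩ => key ν P hP hind fun t => ?_⟩
  · simp [hmar]
  · simp [hmar]

/-- **S-CuSum false alarm lower bound.** For every `γ ≥ 1`, the S-CuSum stopping time
with thresholds `b0 = bC = log γ` satisfies `E_∞[T_S] ≥ γ` and
`inf_{ν ≥ 1} E_{ν,μC}[T_S] ≥ γ`. -/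
theorem sCusum_false_alarm_lower_bound
    [StandardBorelSpace E]
    (μ0 μC μB : Measure E)
    [IsProbabilityMeasure μ0] [IsProbabilityMeasure μC] [IsProbabilityMeasure μB]
    (hne0C : μ0 ≠ μC) (hne0B : μ0 ≠ μB) (hneCB : μC ≠ μB)
    (hac0C : μ0 ≪ μC) (hacC0 : μC ≪ μ0) (hac0B : μ0 ≪ μB) (hacB0 : μB ≪ μ0)
    (hacCB : μC ≪ μB) (hacBC : μB ≪ μC)
    (hKL0C : FinKL μ0 μC) (hKLC0 : FinKL μC μ0) (hKL0B : FinKL μ0 μB)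
    (hKLB0 : FinKL μB μ0) (hKLCB : FinKL μC μB) (hKLBC : FinKL μB μC)
    (γ : ℝ) (hγ : 1 ≤ γ) :
    (∀ Pinf : Measure (ℕ → E), IsChangeMeasure μ0 μ0 1 Pinf →
      ENNReal.ofReal γ ≤ expTime Pinf (TS μ0 μC μB (Real.log γ) (Real.log γ))) ∧
    (∀ ν : ℕ, 1 ≤ ν → ∀ P : Measure (ℕ → E), IsChangeMeasure μ0 μC ν P →
      ENNReal.ofReal γ ≤ expTime P (TS μ0 μC μB (Real.log γ) (Real.log γ))) :=
  sCusum_false_alarm_lower_bound_general μ0 μC μB hac0B hacCB γ hγ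

end QCDStmt
end
end

section
/- Let T be a random variable on a probability space taking values in {1, 2, …} ∪ {∞}, let α be a positive integer, and let γ be a real number with α ≤ γ. If P[T ≥ ν + α ∣ T ≥ ν] ≤ 1 − α/γ for every integer ν ≥ 1 with P[T ≥ ν] > 0, then E[T] ≤ γ. -/
open MeasureTheory
open scoped ENNReal

noncomputable section

/-! Writing `u n = P[T ≥ n + 1]`, the expectation of `T` is `∑ n, u n`. The conditional bound
gives `u (n + α) ≤ r * u n` with `r = 1 - α/γ`, hence `u n ≤ r ^ ⌊n / α⌋`, and summing
`α` copies of each power of `r` yields `E[T] ≤ α / (1 - r) = γ`. -/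

lemma ENat.toENNReal_eq_tsum_ite (m : ℕ∞) :
    (m : ℝ≥0∞) = ∑' n : ℕ, if ((n + 1 : ℕ) : ℕ∞) ≤ m then 1 else 0 := by
  cases m with
  | top => simp
  | coe k =>
    rw [tsum_eq_sum (s := Finset.range k) fun n hn => by
      simp only [Finset.mem_range, not_lt] at hn
      simp only [Nat.cast_le, ite_eq_right_iff]
      omega]
    rw [Finset.sum_ite_of_true fun n hn => by
      simp only [Finset.mem_range] at hn
      exact_mod_cast hn]
    simp

lemma lintegral_enat_eq_tsum_measure_le {Ω : Type*} [MeasurableSpace Ω] (μ : Measure Ω)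
    {T : Ω → ℕ∞} (hT : Measurable T) :
    ∫⁻ ω, (T ω : ℝ≥0∞) ∂μ = ∑' n : ℕ, μ {ω | ((n + 1 : ℕ) : ℕ∞) ≤ T ω} := by
  have hmeas (n : ℕ) : MeasurableSet {ω | ((n + 1 : ℕ) : ℕ∞) ≤ T ω} :=
    hT (Set.to_countable {m : ℕ∞ | ((n + 1 : ℕ) : ℕ∞) ≤ m}).measurableSet
  simp_rw [ENat.toENNReal_eq_tsum_ite]
  rw [lintegral_tsum fun n =>
    (Measurable.ite (hmeas n) measurable_const measurable_const).aemeasurable]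
  congr 1; funext n
  simp only [← lintegral_indicator_one (hmeas n), Set.indicator_apply, Set.mem_ofPred_eq,
    Pi.one_apply]

lemma le_pow_div_of_antitone_of_le_mul {u : ℕ → ℝ≥0∞} {r : ℝ≥0∞} {α : ℕ} (hu : Antitone u)
    (hu0 : u 0 ≤ 1) (hstep : ∀ n, u (n + α) ≤ r * u n) (n : ℕ) : u n ≤ r ^ (n / α) := by
  have hmul (k : ℕ) : u (k * α) ≤ r ^ k := by
    induction k with
    | zero => simpa using hu0
    | succ k ih =>
      calc u ((k + 1) * α) = u (k * α + α) := by rw [Nat.succ_mul]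
        _ ≤ r * u (k * α) := hstep _
        _ ≤ r * r ^ k := by gcongr
        _ = r ^ (k + 1) := (pow_succ' r k).symm
  exact (hu (Nat.div_mul_le_self n α)).trans (hmul _)

lemma ENNReal.tsum_pow_div (r : ℝ≥0∞) {α : ℕ} (hα : α ≠ 0) :
    ∑' n : ℕ, r ^ (n / α) = α * (1 - r)⁻¹ := by
  have : NeZero α := ⟨hα⟩
  rw [← (Nat.divModEquiv α).symm.tsum_eq, ENNReal.tsum_prod', ← ENNReal.tsum_geometric,
    ← ENNReal.tsum_mul_left]
  congr 1; funext k
  have hdiv (i : Fin α) : (k * α + i) / α = k := by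
    rw [mul_comm, Nat.mul_add_div (Nat.pos_of_ne_zero hα), Nat.div_eq_of_lt i.isLt, add_zero]
  simp [Nat.divModEquiv, hdiv]

lemma ENNReal.le_mul_of_div_le_of_le {a b r : ℝ≥0∞} (hab : a ≤ b) (hb : b ≠ ∞)
    (h : 0 < b → a / b ≤ r) : a ≤ r * b := by
  rcases eq_zero_or_pos b with rfl | hb0
  · simpa using hab
  · exact (ENNReal.div_le_iff hb0.ne' hb).mp (h hb0)

lemma ENNReal.natCast_mul_inv_one_sub_ofReal_one_sub_div {α : ℕ} {γ : ℝ} (hα : 0 < α)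
    (hαγ : (α : ℝ) ≤ γ) : (α : ℝ≥0∞) * (1 - ENNReal.ofReal (1 - α / γ))⁻¹ = ENNReal.ofReal γ := by
  have hα' : (0 : ℝ) < α := by exact_mod_cast hα
  have hγ : 0 < γ := hα'.trans_le hαγ
  have hle : (α : ℝ) / γ ≤ 1 := (div_le_one hγ).mpr hαγ
  have hsub : 1 - ENNReal.ofReal (1 - α / γ) = ENNReal.ofReal (α / γ) := by
    rw [← ENNReal.ofReal_one, ← ENNReal.ofReal_sub _ (sub_nonneg.mpr hle)]
    congr 1
    ring
  rw [hsub, ← ENNReal.ofReal_natCast, ← div_eq_mul_inv, ← ENNReal.ofReal_div_of_pos (by positivity)]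
  congr 1
  field_simp

theorem expectation_le_of_conditional_tail_bound_general
    {Ω : Type*} [MeasurableSpace Ω] (P : Measure Ω) [IsProbabilityMeasure P]
    (T : Ω → ℕ∞) (hTmeas : Measurable T)
    (α : ℕ) (hα : 0 < α) (γ : ℝ) (hαγ : (α : ℝ) ≤ γ)
    (hcond : ∀ ν : ℕ, 1 ≤ ν → 0 < P {ω | (ν : ℕ∞) ≤ T ω} →
      P {ω | ((ν + α : ℕ) : ℕ∞) ≤ T ω} / P {ω | (ν : ℕ∞) ≤ T ω} ≤
        ENNReal.ofReal (1 - (α : ℝ) / γ)) :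
    ∫⁻ ω, (T ω : ℝ≥0∞) ∂P ≤ ENNReal.ofReal γ := by
  set u : ℕ → ℝ≥0∞ := fun n => P {ω | ((n + 1 : ℕ) : ℕ∞) ≤ T ω}
  have hu : Antitone u := fun m n hmn =>
    measure_mono fun ω (hω : ((n + 1 : ℕ) : ℕ∞) ≤ T ω) =>
      (show ((m + 1 : ℕ) : ℕ∞) ≤ (n + 1 : ℕ) by exact_mod_cast Nat.succ_le_succ hmn).trans hω
  have hstep (n : ℕ) : u (n + α) ≤ ENNReal.ofReal (1 - α / γ) * u n := by
    have h := hcond (n + 1) n.succ_pos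
    rw [Nat.add_right_comm] at h
    exact ENNReal.le_mul_of_div_le_of_le (hu (Nat.le_add_right n α)) (measure_ne_top P _) h
  calc ∫⁻ ω, (T ω : ℝ≥0∞) ∂P = ∑' n, u n := lintegral_enat_eq_tsum_measure_le P hTmeas
    _ ≤ ∑' n, ENNReal.ofReal (1 - α / γ) ^ (n / α) :=
      ENNReal.tsum_le_tsum (le_pow_div_of_antitone_of_le_mul hu prob_le_one hstep)
    _ = α * (1 - ENNReal.ofReal (1 - α / γ))⁻¹ := ENNReal.tsum_pow_div _ hα.ne'
    _ = ENNReal.ofReal γ := ENNReal.natCast_mul_inv_one_sub_ofReal_one_sub_div hα hαγ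

/-- If `T` takes values in `{1, 2, …} ∪ {∞}`, `α` is a positive integer, `γ ∈ ℝ` with
`α ≤ γ`, and `P[T ≥ ν + α ∣ T ≥ ν] ≤ 1 − α/γ` for every `ν ≥ 1` with `P[T ≥ ν] > 0`,
then `E[T] ≤ γ`. -/
theorem expectation_le_of_conditional_tail_bound
    {Ω : Type*} [MeasurableSpace Ω] (P : Measure Ω) [IsProbabilityMeasure P]
    (T : Ω → ℕ∞) (hTmeas : Measurable T) (hT1 : ∀ ω, 1 ≤ T ω)
    (α : ℕ) (hα : 0 < α) (γ : ℝ) (hαγ : (α : ℝ) ≤ γ)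
    (hcond : ∀ ν : ℕ, 1 ≤ ν → 0 < P {ω | (ν : ℕ∞) ≤ T ω} →
      P {ω | ((ν + α : ℕ) : ℕ∞) ≤ T ω} / P {ω | (ν : ℕ∞) ≤ T ω} ≤
        ENNReal.ofReal (1 - (α : ℝ) / γ)) :
    ∫⁻ ω, (T ω : ℝ≥0∞) ∂P ≤ ENNReal.ofReal γ :=
  expectation_le_of_conditional_tail_bound_general P T hTmeas α hα γ hαγ hcond
end
end
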